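/- arXiv:2408.11521 — 3 statements merged into one kernel-verified Lean document; each statement's English description precedes it below -/
import Mathlib

section
/- Let θ>0 and a>0. If a nonnegative random variable D satisfies the Dickman fixed-point equation with parameters (θ,a), then its Laplace transform is given by E[e^{-sD}] = exp(−θ ∫_0^a (1−e^{−su})/u du) for all s ≥ 0; that is, D has the generalized Dickman distribution GD(θ,a). -/
open MeasureTheory ProbabilityTheory

/-- The uniform probability measure on the interval `(c, d]`. -/
noncomputable def unifIoc (c d : ℝ) : Measure ℝ :=
  (ENNReal.ofReal (d - c))⁻¹ • volume.restrict (Set.Ioc c d)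

/-- `D` satisfies the Dickman fixed-point equation with parameters `(θ, a)`:
`D =_d U^{1/θ} (a + D)` with `U` uniform on `(0,1]` independent of `D`. -/
def DickmanFP {Ω : Type*} [MeasurableSpace Ω] (P : Measure Ω) (θ a : ℝ) (D : Ω → ℝ) : Prop :=
  P.map D = (P.prod (unifIoc 0 1)).map fun p : Ω × ℝ => p.2 ^ (1 / θ) * (a + D p.1)

/-- If a nonnegative random variable `D` satisfies the Dickman fixed-point equation with
parameters `(θ, a)`, then its Laplace transform is
`E[e^{-sD}] = exp(−θ ∫_0^a (1−e^{−su})/u du)` for all `s ≥ 0`; i.e. `D ∼ GD(θ,a)`. -/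
theorem statement4 {Ω : Type*} [MeasurableSpace Ω] (P : Measure Ω) [IsProbabilityMeasure P]
    (θ a : ℝ) (hθ : 0 < θ) (ha : 0 < a)
    (D : Ω → ℝ) (hD : Measurable D) (hDnn : ∀ ω, 0 ≤ D ω)
    (h : DickmanFP P θ a D) :
    ∀ s : ℝ, 0 ≤ s →
      ∫ ω, Real.exp (-(s * D ω)) ∂P =
        Real.exp (-(θ * ∫ u in (0:ℝ)..a, (1 - Real.exp (-(s * u))) / u)) := by
  set φ : ℝ → ℝ := fun s => ∫ ω, Real.exp (-(s * D ω)) ∂P with hφdef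
  set ψ : ℝ → ℝ := fun t => Real.exp (-(t * a)) * φ t with hψdef
  -- basic facts
  have hmeas : ∀ s : ℝ, Measurable fun ω => Real.exp (-(s * D ω)) := fun s =>
    (Real.measurable_exp.comp ((hD.const_mul s).neg))
  have hbd : ∀ s : ℝ, 0 ≤ s → ∀ ω, ‖Real.exp (-(s * D ω))‖ ≤ 1 := by
    intro s hs ω
    rw [Real.norm_eq_abs, abs_of_pos (Real.exp_pos _)]
    exact Real.exp_le_one_iff.2 (by simp [mul_nonneg hs (hDnn ω)])
  have hInt : ∀ s : ℝ, 0 ≤ s → Integrable (fun ω => Real.exp (-(s * D ω))) P := by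
    intro s hs
    exact (integrable_const (1:ℝ)).mono' (hmeas s).aestronglyMeasurable
      (Filter.Eventually.of_forall (hbd s hs))
  have hφ0 : φ 0 = 1 := by simp [hφdef]
  have hφ01 : ∀ s : ℝ, 0 ≤ s → 0 ≤ φ s ∧ φ s ≤ 1 := by
    intro s hs
    constructor
    · exact integral_nonneg fun ω => (Real.exp_pos _).le
    · calc φ s ≤ ∫ _ω, (1:ℝ) ∂P := by
            refine integral_mono (hInt s hs) (integrable_const 1) fun ω => ?_
            have := hbd s hs ω
            rwa [Real.norm_eq_abs, abs_of_pos (Real.exp_pos _)] at this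
        _ = 1 := by simp
  -- continuity of φ on [0, ∞)
  have hφcont : ContinuousOn φ (Set.Ici 0) := by
    intro s₀ _hs₀
    apply continuousWithinAt_of_dominated (bound := fun _ => (1:ℝ))
    · exact Filter.Eventually.of_forall fun s => (hmeas s).aestronglyMeasurable
    · filter_upwards [self_mem_nhdsWithin] with s hs
      exact Filter.Eventually.of_forall (hbd s hs)
    · exact integrable_const 1
    · refine Filter.Eventually.of_forall fun ω => ?_
      exact (Real.continuous_exp.comp ((continuous_id.mul continuous_const).neg)).continuousWithinAt
  -- the fixed-point identity
  have hν : unifIoc 0 1 = volume.restrict (Set.Ioc 0 1) := by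
    simp [unifIoc]
  haveI hνprob : IsProbabilityMeasure (unifIoc 0 1) := by
    constructor
    rw [hν, Measure.restrict_apply MeasurableSet.univ]
    simp
  have hmapfun : Measurable (fun p : Ω × ℝ => p.2 ^ (1 / θ) * (a + D p.1)) := by
    exact (measurable_snd.pow_const _).mul (measurable_const.add (hD.comp measurable_fst))
  have hae : ∀ᵐ p : Ω × ℝ ∂(P.prod (unifIoc 0 1)), p.2 ∈ Set.Ioc (0:ℝ) 1 := by
    rw [ae_iff]
    have hset : {p : Ω × ℝ | ¬ p.2 ∈ Set.Ioc (0:ℝ) 1} = Set.univ ×ˢ (Set.Ioc (0:ℝ) 1)ᶜ := by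
      ext p; simp
    rw [hset, Measure.prod_prod, hν, Measure.restrict_apply measurableSet_Ioc.compl]
    simp
  have key : ∀ s : ℝ, 0 ≤ s → φ s = ∫ u in Set.Ioc (0:ℝ) 1, ψ (s * u ^ (1 / θ)) := by
    intro s hs
    have hcontexp : Continuous fun x : ℝ => Real.exp (-(s * x)) :=
      Real.continuous_exp.comp ((continuous_const.mul continuous_id).neg)
    have e1 : φ s = ∫ x, Real.exp (-(s * x)) ∂(P.map D) := by
      rw [integral_map hD.aemeasurable hcontexp.aestronglyMeasurable]
    rw [e1, h, integral_map hmapfun.aemeasurable hcontexp.aestronglyMeasurable]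
    have hIntProd : Integrable
        (fun p : Ω × ℝ => Real.exp (-(s * (p.2 ^ (1 / θ) * (a + D p.1)))))
        (P.prod (unifIoc 0 1)) := by
      refine (integrable_const (1:ℝ)).mono'
        ((Real.measurable_exp.comp ((measurable_const.mul hmapfun).neg)).aestronglyMeasurable) ?_
      filter_upwards [hae] with p hp
      rw [Real.norm_eq_abs, abs_of_pos (Real.exp_pos _)]
      refine Real.exp_le_one_iff.2 (neg_nonpos.2 (mul_nonneg hs (mul_nonneg ?_ ?_)))
      · exact Real.rpow_nonneg hp.1.le _
      · exact add_nonneg ha.le (hDnn p.1)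
    rw [integral_prod_symm _ hIntProd, hν]
    refine setIntegral_congr_fun measurableSet_Ioc fun u _ => ?_
    have : ∀ ω, Real.exp (-(s * (u ^ (1/θ) * (a + D ω)))) =
        Real.exp (-(s * u ^ (1/θ) * a)) * Real.exp (-((s * u ^ (1/θ)) * D ω)) := by
      intro ω
      rw [← Real.exp_add]
      ring_nf
    simp_rw [this]
    rw [integral_const_mul]
  -- rpow substitution
  have key3 : ∀ s : ℝ, ∫ u in Set.Ioc (0:ℝ) 1, ψ (s * u ^ (1 / θ)) =
      ∫ x in (0:ℝ)..1, θ * x ^ (θ - 1) * ψ (s * x) := by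
    intro s
    have hsub := integral_comp_rpow_Ioi_of_pos
      (g := Set.indicator (Set.Ioc (0:ℝ) 1) (fun y => ψ (s * y ^ (1 / θ)))) hθ
    have hIoi : Set.Ioi (0:ℝ) ∩ Set.Ioc (0:ℝ) 1 = Set.Ioc 0 1 := by
      ext x; simp (config := {contextual := true}) [and_comm, fun h : 0 < x => h]
    rw [setIntegral_indicator measurableSet_Ioc, hIoi] at hsub
    calc ∫ u in Set.Ioc (0:ℝ) 1, ψ (s * u ^ (1 / θ))
        = ∫ x in Set.Ioi (0:ℝ),
            (θ * x ^ (θ - 1)) • (Set.Ioc (0:ℝ) 1).indicator (fun y => ψ (s * y ^ (1/θ))) (x ^ θ) :=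
          hsub.symm
      _ = ∫ x in Set.Ioi (0:ℝ),
            (Set.Ioc (0:ℝ) 1).indicator (fun x => θ * x ^ (θ - 1) * ψ (s * x)) x := by
          refine setIntegral_congr_fun measurableSet_Ioi fun x hx => ?_
          have hx0 : (0:ℝ) < x := hx
          by_cases hx1 : x ≤ 1
          · have hmem : x ∈ Set.Ioc (0:ℝ) 1 := ⟨hx0, hx1⟩
            have hmem' : x ^ θ ∈ Set.Ioc (0:ℝ) 1 :=
              ⟨Real.rpow_pos_of_pos hx0 _, Real.rpow_le_one hx0.le hx1 hθ.le⟩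
            rw [Set.indicator_of_mem hmem', Set.indicator_of_mem hmem, smul_eq_mul,
              ← Real.rpow_mul hx0.le, mul_one_div_cancel hθ.ne', Real.rpow_one]
          · have hmem : x ∉ Set.Ioc (0:ℝ) 1 := fun hm => hx1 hm.2
            have hmem' : x ^ θ ∉ Set.Ioc (0:ℝ) 1 := by
              intro hm
              exact hx1 (le_of_not_gt fun h1 : 1 < x =>
                absurd hm.2 (not_le.2 (Real.one_lt_rpow_iff_of_pos hx0 |>.2 (Or.inl ⟨h1, hθ⟩))))
            rw [Set.indicator_of_notMem hmem', Set.indicator_of_notMem hmem, smul_zero]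
      _ = ∫ x in Set.Ioi (0:ℝ) ∩ Set.Ioc (0:ℝ) 1, θ * x ^ (θ - 1) * ψ (s * x) :=
          setIntegral_indicator measurableSet_Ioc
      _ = ∫ x in (0:ℝ)..1, θ * x ^ (θ - 1) * ψ (s * x) := by
          rw [hIoi, intervalIntegral.integral_of_le zero_le_one]
  -- linear scaling
  have key4 : ∀ s : ℝ, 0 < s → ∫ x in (0:ℝ)..1, θ * x ^ (θ - 1) * ψ (s * x) =
      s ^ (-θ) * ∫ v in (0:ℝ)..s, θ * v ^ (θ - 1) * ψ v := by
    intro s hs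
    have hcong : ∀ x ∈ Set.uIcc (0:ℝ) 1, θ * x ^ (θ - 1) * ψ (s * x) =
        s ^ (-(θ - 1)) * (θ * (s * x) ^ (θ - 1) * ψ (s * x)) := by
      intro x hx
      rw [Set.uIcc_of_le zero_le_one] at hx
      rw [Real.mul_rpow hs.le hx.1]
      have h1 : s ^ (-(θ - 1)) * s ^ (θ - 1) = 1 := by
        rw [← Real.rpow_add hs, neg_add_cancel, Real.rpow_zero]
      rw [show s ^ (-(θ - 1)) * (θ * (s ^ (θ - 1) * x ^ (θ - 1)) * ψ (s * x)) =
        (s ^ (-(θ - 1)) * s ^ (θ - 1)) * (θ * x ^ (θ - 1) * ψ (s * x)) from by ring, h1, one_mul]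
    rw [intervalIntegral.integral_congr hcong, intervalIntegral.integral_const_mul]
    have hscale : (∫ x in (0:ℝ)..1, θ * (s * x) ^ (θ - 1) * ψ (s * x)) =
        s⁻¹ * ∫ v in (0:ℝ)..s, θ * v ^ (θ - 1) * ψ v := by
      have := intervalIntegral.mul_integral_comp_mul_left
        (a := (0:ℝ)) (b := 1) (f := fun v => θ * v ^ (θ - 1) * ψ v) (c := s)
      rw [mul_zero, mul_one] at this
      rw [← this, ← mul_assoc, inv_mul_cancel₀ hs.ne', one_mul]
    rw [hscale, ← mul_assoc]
    congr 1
    rw [← Real.rpow_neg_one s, ← Real.rpow_add hs]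
    congr 1
    ring
  have hkey : ∀ s : ℝ, 0 < s → φ s =
      s ^ (-θ) * ∫ v in (0:ℝ)..s, θ * v ^ (θ - 1) * ψ v := by
    intro s hs
    rw [key s hs.le, key3 s, key4 s hs]
  -- FTC and derivative of φ
  set f : ℝ → ℝ := fun v => θ * v ^ (θ - 1) * ψ v with hfdef
  set G : ℝ → ℝ := fun t => ∫ v in (0:ℝ)..t, f v with hGdef
  have hψcont : ContinuousOn ψ (Set.Ici 0) :=
    ((Real.continuous_exp.comp (continuous_id.mul continuous_const).neg).continuousOn).mul hφcont
  have hψ01 : ∀ v : ℝ, 0 ≤ v → 0 ≤ ψ v ∧ ψ v ≤ 1 := by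
    intro v hv
    have he0 : 0 < Real.exp (-(v * a)) := Real.exp_pos _
    have he1 : Real.exp (-(v * a)) ≤ 1 :=
      Real.exp_le_one_iff.2 (neg_nonpos.2 (mul_nonneg hv ha.le))
    constructor
    · exact mul_nonneg he0.le (hφ01 v hv).1
    · exact mul_le_one₀ he1 (hφ01 v hv).1 (hφ01 v hv).2
  have hfcont : ContinuousOn f (Set.Ioi 0) := by
    refine ContinuousOn.mul (ContinuousOn.mul continuousOn_const ?_)
      (hψcont.mono Set.Ioi_subset_Ici_self)
    exact fun x hx => (Real.continuousAt_rpow_const x _ (Or.inl (ne_of_gt hx))).continuousWithinAt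
  have hfint : ∀ s : ℝ, 0 < s → IntervalIntegrable f volume 0 s := by
    intro s hs
    refine IntervalIntegrable.mono_fun
      ((intervalIntegral.intervalIntegrable_rpow' (by linarith : (-1:ℝ) < θ - 1)).const_mul θ)
      ?_ ?_
    · rw [Set.uIoc_of_le hs.le]
      exact (hfcont.mono (Set.Ioc_subset_Ioi_self)).aestronglyMeasurable measurableSet_Ioc
    · rw [Set.uIoc_of_le hs.le]
      filter_upwards [ae_restrict_mem measurableSet_Ioc] with v hv
      have h1 : 0 ≤ θ * v ^ (θ - 1) := mul_nonneg hθ.le (Real.rpow_nonneg hv.1.le _)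
      rw [Real.norm_eq_abs, Real.norm_eq_abs, hfdef, abs_mul, abs_of_nonneg h1]
      have hv01 := hψ01 v hv.1.le
      have habs : |ψ v| ≤ 1 := abs_le.2 ⟨by linarith, hv01.2⟩
      nlinarith
  have hG' : ∀ s : ℝ, 0 < s → HasDerivAt G (f s) s := by
    intro s hs
    exact intervalIntegral.integral_hasDerivAt_right (hfint s hs)
      (hfcont.stronglyMeasurableAtFilter isOpen_Ioi s hs)
      (hfcont.continuousAt (Ioi_mem_nhds hs))
  have hφ' : ∀ s : ℝ, 0 < s →
      HasDerivAt φ (θ / s * (Real.exp (-(s * a)) - 1) * φ s) s := by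
    intro s hs
    have h1 : HasDerivAt (fun t : ℝ => t ^ (-θ)) (-θ * s ^ (-θ - 1)) s :=
      Real.hasDerivAt_rpow_const (Or.inl hs.ne')
    have h2 : HasDerivAt (fun t => t ^ (-θ) * G t)
        (-θ * s ^ (-θ - 1) * G s + s ^ (-θ) * f s) s := h1.mul (hG' s hs)
    have heq : φ =ᶠ[nhds s] fun t => t ^ (-θ) * G t := by
      filter_upwards [Ioi_mem_nhds hs] with t ht
      exact hkey t ht
    have h3 : HasDerivAt φ (-θ * s ^ (-θ - 1) * G s + s ^ (-θ) * f s) s :=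
      h2.congr_of_eventuallyEq heq
    have hGs : G s = s ^ θ * φ s := by
      rw [hkey s hs, ← mul_assoc, ← Real.rpow_add hs, add_neg_cancel, Real.rpow_zero, one_mul]
    have e1 : s ^ (-θ - 1) * s ^ θ = s⁻¹ := by
      rw [← Real.rpow_add hs, show -θ - 1 + θ = -1 by ring, Real.rpow_neg_one]
    have e2 : s ^ (-θ) * s ^ (θ - 1) = s⁻¹ := by
      rw [← Real.rpow_add hs, show -θ + (θ - 1) = -1 by ring, Real.rpow_neg_one]
    convert h3 using 1
    rw [hGs, hfdef]
    rw [show -θ * s ^ (-θ - 1) * (s ^ θ * φ s) + s ^ (-θ) * (θ * s ^ (θ - 1) * ψ s) =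
        -θ * (s ^ (-θ - 1) * s ^ θ) * φ s + θ * (s ^ (-θ) * s ^ (θ - 1)) * ψ s from by ring,
      e1, e2, hψdef]
    field_simp
    ring
  -- solve the ODE
  have hGD : ∀ s : ℝ, 0 < s →
      φ s = Real.exp (-(θ * ∫ v in (0:ℝ)..s, (1 - Real.exp (-(a * v))) / v)) := by
    set k : ℝ → ℝ := fun v => (1 - Real.exp (-(a * v))) / v with hkdef
    set K : ℝ → ℝ := fun t => ∫ v in (0:ℝ)..t, k v with hKdef
    have hkcont : ContinuousOn k (Set.Ioi 0) := by
      refine ContinuousOn.div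
        ((continuous_const.sub (Real.continuous_exp.comp
          (continuous_const.mul continuous_id).neg)).continuousOn) continuousOn_id
        fun x hx => ne_of_gt hx
    have hkbd : ∀ v : ℝ, 0 < v → 0 ≤ k v ∧ k v ≤ a := by
      intro v hv
      have h1 : Real.exp (-(a * v)) ≤ 1 :=
        Real.exp_le_one_iff.2 (neg_nonpos.2 (mul_nonneg ha.le hv.le))
      have h2 : 1 - Real.exp (-(a * v)) ≤ a * v := by
        have := Real.add_one_le_exp (-(a * v))
        linarith
      constructor
      · exact div_nonneg (by linarith) hv.le
      · rw [div_le_iff₀ hv]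
        nlinarith
    have hkint : ∀ s : ℝ, 0 ≤ s → IntervalIntegrable k volume 0 s := by
      intro s hs
      refine IntervalIntegrable.mono_fun (intervalIntegrable_const (c := a)) ?_ ?_
      · rw [Set.uIoc_of_le hs]
        exact (hkcont.mono Set.Ioc_subset_Ioi_self).aestronglyMeasurable measurableSet_Ioc
      · rw [Set.uIoc_of_le hs]
        filter_upwards [ae_restrict_mem measurableSet_Ioc] with v hv
        rw [Real.norm_eq_abs, Real.norm_eq_abs, abs_of_nonneg (hkbd v hv.1).1,
          abs_of_pos ha]
        exact (hkbd v hv.1).2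
    have hK' : ∀ s : ℝ, 0 < s → HasDerivAt K (k s) s := by
      intro s hs
      exact intervalIntegral.integral_hasDerivAt_right (hkint s hs.le)
        (hkcont.stronglyMeasurableAtFilter isOpen_Ioi s hs)
        (hkcont.continuousAt (Ioi_mem_nhds hs))
    have hK0 : Filter.Tendsto K (nhdsWithin 0 (Set.Ici 0)) (nhds 0) := by
      apply squeeze_zero_norm' (a := fun s => a * s)
      · filter_upwards [self_mem_nhdsWithin] with s hs
        have hb : ∀ x ∈ Set.uIoc (0:ℝ) s, ‖k x‖ ≤ a := by
          rw [Set.uIoc_of_le hs]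
          intro x hx
          rw [Real.norm_eq_abs, abs_of_nonneg (hkbd x hx.1).1]
          exact (hkbd x hx.1).2
        have hb2 := intervalIntegral.norm_integral_le_of_norm_le_const hb
        rwa [sub_zero, abs_of_nonneg hs] at hb2
      · have h5 : Filter.Tendsto (fun s : ℝ => a * s) (nhds 0) (nhds (a * 0)) :=
          (continuous_const.mul continuous_id).tendsto 0
        rw [mul_zero] at h5
        exact h5.mono_left nhdsWithin_le_nhds
    set H : ℝ → ℝ := fun t => φ t * Real.exp (θ * K t) with hHdef
    have hH' : ∀ s : ℝ, 0 < s → HasDerivAt H 0 s := by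
      intro s hs
      have hF' : HasDerivAt (fun t => θ * K t) (θ * k s) s := (hK' s hs).const_mul θ
      have hexp : HasDerivAt (fun t => Real.exp (θ * K t))
          (Real.exp (θ * K s) * (θ * k s)) s := hF'.exp
      have hH := (hφ' s hs).mul hexp
      have hval : θ / s * (Real.exp (-(s * a)) - 1) * φ s * Real.exp (θ * K s) +
          φ s * (Real.exp (θ * K s) * (θ * k s)) = 0 := by
        have hks : k s = (1 - Real.exp (-(s * a))) / s := by
          rw [hkdef]; simp [mul_comm]
        rw [hks]
        field_simp
        ring
      rwa [hval] at hH
    have hH1 : ∀ s : ℝ, 0 < s → H s = 1 := by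
      intro s hs
      have hconst : ∀ ε : ℝ, 0 < ε → ε ≤ s → H s = H ε := by
        intro ε hε hεs
        have := constant_of_has_deriv_right_zero (f := H) (a := ε) (b := s)
          (fun x hx => ((hH' x (lt_of_lt_of_le hε hx.1)).continuousAt).continuousWithinAt)
          (fun x hx => ((hH' x (lt_of_lt_of_le hε hx.1)).hasDerivWithinAt))
        exact this s ⟨hεs, le_refl s⟩
      have hlim : Filter.Tendsto H (nhdsWithin 0 (Set.Ioi 0)) (nhds 1) := by
        have h1 : Filter.Tendsto φ (nhdsWithin 0 (Set.Ici 0)) (nhds 1) := by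
          have := (hφcont 0 Set.self_mem_Ici)
          rwa [ContinuousWithinAt, hφ0] at this
        have h2 : Filter.Tendsto (fun t => Real.exp (θ * K t))
            (nhdsWithin 0 (Set.Ici 0)) (nhds 1) := by
          have h3 : Filter.Tendsto (fun t => θ * K t) (nhdsWithin 0 (Set.Ici 0)) (nhds 0) := by
            have := hK0.const_mul θ
            rwa [mul_zero] at this
          have := (Real.continuous_exp.tendsto 0).comp h3
          rwa [Real.exp_zero] at this
        have := h1.mul h2
        rw [mul_one] at this
        exact this.mono_left (nhdsWithin_mono 0 Set.Ioi_subset_Ici_self)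
      have hev : ∀ᶠ ε in nhdsWithin 0 (Set.Ioi 0), H ε = H s := by
        filter_upwards [Ioo_mem_nhdsGT_of_mem (Set.left_mem_Ico.2 hs)] with ε hε
        exact (hconst ε hε.1 hε.2.le).symm
      have hcl : Filter.Tendsto (fun _ : ℝ => H s) (nhdsWithin 0 (Set.Ioi 0)) (nhds 1) :=
        hlim.congr' hev
      exact tendsto_nhds_unique tendsto_const_nhds hcl
    intro s hs
    have hone := hH1 s hs
    rw [hHdef] at hone
    rw [Real.exp_neg]
    exact eq_inv_of_mul_eq_one_left hone
  -- final scaling identity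
  have hswap : ∀ s : ℝ, 0 < s →
      ∫ u in (0:ℝ)..a, (1 - Real.exp (-(s * u))) / u =
        ∫ v in (0:ℝ)..s, (1 - Real.exp (-(a * v))) / v := by
    intro s hs
    set c := s / a with hc
    have hc0 : c ≠ 0 := div_ne_zero hs.ne' ha.ne'
    have hpt : ∀ u : ℝ, (1 - Real.exp (-(s * u))) / u =
        c * ((1 - Real.exp (-(a * (c * u)))) / (c * u)) := by
      intro u
      have h1 : a * (c * u) = s * u := by rw [hc]; field_simp
      rw [h1, mul_div_assoc', mul_div_mul_left _ _ hc0]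
    calc ∫ u in (0:ℝ)..a, (1 - Real.exp (-(s * u))) / u
        = ∫ u in (0:ℝ)..a, c * ((1 - Real.exp (-(a * (c * u)))) / (c * u)) := by
          simp_rw [hpt]
      _ = c * ∫ u in (0:ℝ)..a, (1 - Real.exp (-(a * (c * u)))) / (c * u) :=
          intervalIntegral.integral_const_mul _ _
      _ = ∫ v in (c * 0)..(c * a), (1 - Real.exp (-(a * v))) / v :=
          intervalIntegral.mul_integral_comp_mul_left
            (f := fun v => (1 - Real.exp (-(a * v))) / v) (c := c)
      _ = ∫ v in (0:ℝ)..s, (1 - Real.exp (-(a * v))) / v := by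
          rw [mul_zero, hc, div_mul_cancel₀ _ ha.ne']
  -- conclusion
  intro s hs
  rcases eq_or_lt_of_le hs with rfl | hs'
  · simp [hφ0]
  · show φ s = _
    rw [hGD s hs', hswap s hs']
end

section
/- Let θ_1, θ_2 > 0 and a > 0. If D_1 and D_2 are independent nonnegative random variables such that D_1 satisfies the Dickman fixed-point equation with parameters (θ_1, a) and D_2 satisfies the Dickman fixed-point equation with parameters (θ_2, a), then their sum D_1 + D_2 satisfies the Dickman fixed-point equation with parameters (θ_1 + θ_2, a). -/
open MeasureTheory ProbabilityTheory

open Set Complex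

/-!
Pass to characteristic functions. Along each ray `s ↦ t * s`, the substitution `u = v ^ θ` turns
the fixed-point equation for the law of `D` into
`s ^ θ * φ s = θ * ∫ r in 0..s, r ^ (θ - 1) * exp (i t a r) * φ r` for `s > 0`,
i.e. `(s ^ θ * φ s)' = θ * s ^ (θ - 1) * exp (i t a s) * φ s` with `s ^ θ * φ s → 0` at `0`.
By the product rule, `s ^ (θ₁ + θ₂) * φ₁ s * φ₂ s` satisfies the same equation with `θ₁ + θ₂`;
by independence `φ₁ * φ₂` is the characteristic function of `D₁ + D₂`, and characteristic
functions determine laws.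
-/

def DickmanIntegralEq (θ : ℝ) (w g : ℝ → ℂ) : Prop :=
  ∀ s : ℝ, 0 < s → (s ^ θ : ℝ) • g s = θ • ∫ r in (0 : ℝ)..s, r ^ (θ - 1) • (w r * g r)

section
variable {θ : ℝ} {w g : ℝ → ℂ}

lemma intervalIntegrable_rpow_sub_one_smul (hθ : 0 < θ) (hg : Continuous g) (s : ℝ) :
    IntervalIntegrable (fun r : ℝ => r ^ (θ - 1) • g r) volume 0 s :=
  (intervalIntegral.intervalIntegrable_rpow' (by linarith)).smul_continuousOn hg.continuousOn

lemma DickmanIntegralEq.hasDerivAt (hθ : 0 < θ) (hw : Continuous w) (hg : Continuous g)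
    (h : DickmanIntegralEq θ w g) {s : ℝ} (hs : 0 < s) :
    HasDerivAt (fun s : ℝ => (s ^ θ : ℝ) • g s) ((θ * s ^ (θ - 1)) • (w s * g s)) s := by
  have hcont : ∀ r : ℝ, 0 < r → ContinuousAt (fun r : ℝ => r ^ (θ - 1) • (w r * g r)) r :=
    fun r hr => ((Real.continuousAt_rpow_const _ _ (Or.inl hr.ne')).smul
      (hw.mul hg).continuousAt)
  have hFTC := intervalIntegral.integral_hasDerivAt_right
    (intervalIntegrable_rpow_sub_one_smul hθ (hw.mul hg) s)
    (ContinuousOn.stronglyMeasurableAtFilter isOpen_Ioi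
      (fun r hr => (hcont r hr).continuousWithinAt) s hs) (hcont s hs)
  rw [mul_smul]
  refine (hFTC.const_smul θ).congr_of_eventuallyEq ?_
  filter_upwards [lt_mem_nhds hs] with r hr using h r hr

theorem DickmanIntegralEq.mul {θ₁ θ₂ : ℝ} {g₁ g₂ : ℝ → ℂ} (hθ₁ : 0 < θ₁) (hθ₂ : 0 < θ₂)
    (hw : Continuous w) (hg₁ : Continuous g₁) (hg₂ : Continuous g₂)
    (h₁ : DickmanIntegralEq θ₁ w g₁) (h₂ : DickmanIntegralEq θ₂ w g₂) :
    DickmanIntegralEq (θ₁ + θ₂) w (g₁ * g₂) := by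
  intro s hs
  have hθ : 0 < θ₁ + θ₂ := add_pos hθ₁ hθ₂
  have hderiv : ∀ r ∈ Ioo 0 s, HasDerivAt (fun r : ℝ => (r ^ (θ₁ + θ₂) : ℝ) • (g₁ * g₂) r)
      ((θ₁ + θ₂) • (r ^ (θ₁ + θ₂ - 1) • (w r * (g₁ * g₂) r))) r := by
    rintro r ⟨hr, -⟩
    have hprod := (h₁.hasDerivAt hθ₁ hw hg₁ hr).mul (h₂.hasDerivAt hθ₂ hw hg₂ hr)
    have hsplit₁ : ((r ^ (θ₁ + θ₂ - 1) : ℝ) : ℂ) = (r ^ (θ₁ - 1) : ℝ) * (r ^ θ₂ : ℝ) := by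
      rw [← Complex.ofReal_mul, ← Real.rpow_add hr, sub_add_eq_add_sub]
    have hsplit₂ : ((r ^ (θ₁ + θ₂ - 1) : ℝ) : ℂ) = (r ^ θ₁ : ℝ) * (r ^ (θ₂ - 1) : ℝ) := by
      rw [← Complex.ofReal_mul, ← Real.rpow_add hr, add_sub_assoc]
    refine hprod.congr_of_eventuallyEq ?_ |>.congr_deriv ?_
    · filter_upwards [lt_mem_nhds hr] with x hx
      simp only [Pi.mul_apply, Complex.real_smul, Real.rpow_add hx]
      push_cast; ring
    · simp only [Pi.mul_apply, Complex.real_smul]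
      push_cast
      linear_combination (-↑θ₁ * w r * g₁ r * g₂ r) * hsplit₁ - (↑θ₂ * w r * g₁ r * g₂ r) * hsplit₂
  have hcont : ContinuousOn (fun r : ℝ => (r ^ (θ₁ + θ₂) : ℝ) • (g₁ * g₂) r) (Icc 0 s) :=
    ((Real.continuous_rpow_const hθ.le).smul (hg₁.mul hg₂)).continuousOn
  have hint := ((intervalIntegrable_rpow_sub_one_smul hθ (hw.mul (hg₁.mul hg₂)) s).smul (θ₁ + θ₂))
  rw [← intervalIntegral.integral_smul,
    intervalIntegral.integral_eq_sub_of_hasDerivAt_of_le hs.le hcont hderiv hint]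
  simp [Real.zero_rpow hθ.ne']

end

section
variable {E : Type*} [NormedAddCommGroup E] [NormedSpace ℝ E] {θ : ℝ}

lemma integral_zero_one_comp_rpow_one_div (hθ : 0 < θ) {k : ℝ → E} (hk : Continuous k) :
    ∫ u in (0 : ℝ)..1, k (u ^ (1 / θ)) = θ • ∫ v in (0 : ℝ)..1, v ^ (θ - 1) • k v := by
  have hg : Continuous fun u : ℝ => k (u ^ (1 / θ)) :=
    hk.comp (Real.continuous_rpow_const (by positivity))
  have hsubst := intervalIntegral.integral_deriv_smul_comp''' (a := 0) (b := 1)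
    (f := fun v : ℝ => v ^ θ) (f' := fun v => θ * v ^ (θ - 1))
    (Real.continuous_rpow_const hθ.le).continuousOn
    (fun v hv => (Real.hasDerivAt_rpow_const
      (Or.inl (lt_of_le_of_lt (by simp) hv.1).ne')).hasDerivWithinAt)
    hg.continuousOn
    (hg.continuousOn.integrableOn_compact (isCompact_uIcc.image (Real.continuous_rpow_const hθ.le)))
    ?_
  · have hcancel : ∀ v ∈ uIcc (0 : ℝ) 1,
        (θ * v ^ (θ - 1)) • k ((v ^ θ) ^ (1 / θ)) = θ • (v ^ (θ - 1) • k v) := by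
      intro v hv
      rw [uIcc_of_le zero_le_one] at hv
      rw [one_div, Real.rpow_rpow_inv hv.1 hθ.ne', mul_smul]
    simp only [Function.comp_def] at hsubst
    rw [intervalIntegral.integral_congr hcancel, intervalIntegral.integral_smul,
      Real.zero_rpow hθ.ne', Real.one_rpow] at hsubst
    exact hsubst.symm
  · rw [← intervalIntegrable_iff']
    exact ((intervalIntegral.intervalIntegrable_rpow' (by linarith)).const_mul θ).smul_continuousOn
      (hg.comp (Real.continuous_rpow_const hθ.le)).continuousOn

lemma rpow_smul_integral_zero_one_comp_mul {s : ℝ} (hs : 0 < s) (k : ℝ → E) :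
    s ^ θ • ∫ v in (0 : ℝ)..1, v ^ (θ - 1) • k (s * v) = ∫ r in (0 : ℝ)..s, r ^ (θ - 1) • k r := by
  have hrescale : ∀ v ∈ uIcc (0 : ℝ) 1,
      v ^ (θ - 1) • k (s * v) = (s ^ (θ - 1))⁻¹ • ((s * v) ^ (θ - 1) • k (s * v)) := by
    intro v hv
    rw [uIcc_of_le zero_le_one] at hv
    rw [Real.mul_rpow hs.le hv.1, smul_smul, ← mul_assoc,
      inv_mul_cancel₀ (Real.rpow_pos_of_pos hs _).ne', one_mul]
  rw [intervalIntegral.integral_congr hrescale, intervalIntegral.integral_smul,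
    intervalIntegral.integral_comp_mul_left (fun r => r ^ (θ - 1) • k r) hs.ne', smul_smul,
    smul_smul, mul_zero, mul_one]
  convert one_smul ℝ _
  rw [Real.rpow_sub_one hs.ne']
  field_simp

end

lemma unifIoc_zero_one : unifIoc 0 1 = volume.restrict (Ioc 0 1) := by
  simp [unifIoc]

instance isProbabilityMeasure_unifIoc_zero_one : IsProbabilityMeasure (unifIoc 0 1) :=
  ⟨by simp [unifIoc_zero_one]⟩

lemma charFun_map_dickman {Ω : Type*} [MeasurableSpace Ω] (P : Measure Ω) [IsProbabilityMeasure P]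
    {θ : ℝ} (hθ : 0 < θ) (a : ℝ) {D : Ω → ℝ} (hD : Measurable D) (t : ℝ) :
    charFun ((P.prod (unifIoc 0 1)).map fun p : Ω × ℝ => p.2 ^ (1 / θ) * (a + D p.1)) t
      = θ • ∫ v in (0 : ℝ)..1,
          v ^ (θ - 1) • (cexp (↑(t * v * a) * I) * charFun (P.map D) (t * v)) := by
  have hk : Continuous fun v : ℝ => cexp (↑(t * v * a) * I) * charFun (P.map D) (t * v) := by
    fun_prop
  have hinner : ∀ u : ℝ, ∫ ω, cexp (↑t * ↑(u ^ (1 / θ) * (a + D ω)) * I) ∂P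
      = cexp (↑(t * u ^ (1 / θ) * a) * I) * charFun (P.map D) (t * u ^ (1 / θ)) := by
    intro u
    rw [charFun_apply_real, integral_map hD.aemeasurable (by fun_prop), ← integral_const_mul]
    congr 1 with ω
    rw [← Complex.exp_add]
    push_cast
    ring_nf
  have hint : Integrable (fun p : Ω × ℝ => cexp (↑t * ↑(p.2 ^ (1 / θ) * (a + D p.1)) * I))
      (P.prod (volume.restrict (Ioc 0 1))) := by
    refine (integrable_const (1 : ℝ)).mono (by fun_prop) (ae_of_all _ fun p => ?_)
    rw [← Complex.ofReal_mul, norm_exp_ofReal_mul_I, norm_one]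
  rw [charFun_apply_real, integral_map (by fun_prop) (by fun_prop), unifIoc_zero_one,
    integral_prod_symm _ hint]
  simp only [hinner]
  rw [← intervalIntegral.integral_of_le zero_le_one]
  exact integral_zero_one_comp_rpow_one_div hθ hk

lemma DickmanFP.dickmanIntegralEq {Ω : Type*} [MeasurableSpace Ω] {P : Measure Ω}
    [IsProbabilityMeasure P] {θ a : ℝ} {D : Ω → ℝ} (hθ : 0 < θ) (hD : Measurable D)
    (h : DickmanFP P θ a D) (t : ℝ) :
    DickmanIntegralEq θ (fun r => cexp (↑(t * r * a) * I)) (fun s => charFun (P.map D) (t * s)) := by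
  intro s hs
  beta_reduce
  have hfixed := congrArg (charFun · (t * s)) h
  rw [hfixed, charFun_map_dickman P hθ a hD, smul_comm, ← rpow_smul_integral_zero_one_comp_mul hs]
  simp only [mul_assoc]

theorem statement5_general {Ω : Type*} [MeasurableSpace Ω] (P : Measure Ω) [IsProbabilityMeasure P]
    (θ₁ θ₂ a : ℝ) (hθ₁ : 0 < θ₁) (hθ₂ : 0 < θ₂)
    (D₁ D₂ : Ω → ℝ) (hD₁ : Measurable D₁) (hD₂ : Measurable D₂)
    (hindep : IndepFun D₁ D₂ P)
    (h₁ : DickmanFP P θ₁ a D₁) (h₂ : DickmanFP P θ₂ a D₂) :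
    DickmanFP P (θ₁ + θ₂) a (fun ω => D₁ ω + D₂ ω) := by
  have hsum := hindep.charFun_map_fun_add_eq_mul hD₁.aemeasurable hD₂.aemeasurable
  refine Measure.ext_of_charFun (funext fun t => ?_)
  have key := (h₁.dickmanIntegralEq hθ₁ hD₁ t).mul hθ₁ hθ₂ (by fun_prop)
    (continuous_charFun.comp (continuous_const_mul t))
    (continuous_charFun.comp (continuous_const_mul t)) (h₂.dickmanIntegralEq hθ₂ hD₂ t) 1 one_pos
  beta_reduce
  rw [charFun_map_dickman (D := fun ω => D₁ ω + D₂ ω) P (add_pos hθ₁ hθ₂) a (by fun_prop), hsum]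
  simpa using key

/-- If `D₁`, `D₂` are independent nonnegative random variables satisfying the Dickman
fixed-point equations with parameters `(θ₁, a)` and `(θ₂, a)` respectively, then `D₁ + D₂`
satisfies the Dickman fixed-point equation with parameters `(θ₁ + θ₂, a)`. -/
theorem statement5 {Ω : Type*} [MeasurableSpace Ω] (P : Measure Ω) [IsProbabilityMeasure P]
    (θ₁ θ₂ a : ℝ) (hθ₁ : 0 < θ₁) (hθ₂ : 0 < θ₂) (ha : 0 < a)
    (D₁ D₂ : Ω → ℝ) (hD₁ : Measurable D₁) (hD₂ : Measurable D₂)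
    (hD₁nn : ∀ ω, 0 ≤ D₁ ω) (hD₂nn : ∀ ω, 0 ≤ D₂ ω)
    (hindep : IndepFun D₁ D₂ P)
    (h₁ : DickmanFP P θ₁ a D₁) (h₂ : DickmanFP P θ₂ a D₂) :
    DickmanFP P (θ₁ + θ₂) a (fun ω => D₁ ω + D₂ ω) :=
  statement5_general P θ₁ θ₂ a hθ₁ hθ₂ D₁ D₂ hD₁ hD₂ hindep h₁ h₂
end

section
/- Let θ>0, a>0 and 0<c<1. Let D have the generalized Dickman distribution GD(θ,a); let (E_k), k≥1, be i.i.d. exponential random variables with rate θ, independent of D, and set T_n = E_1 + ⋯ + E_n. Define the innovation ε = Σ_{n=1}^∞ a c e^{T_n} 1{T_n ≤ log(1/c)} (a finite sum almost surely). Then cD + ε has the generalized Dickman distribution GD(θ,a). (Hence the autoregressive process X_n = cX_{n−1} + ε_n with i.i.d. innovations distributed as ε and X_0 ∼ GD(θ,a) is strictly stationary with GD(θ,a) marginals.) -/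
/-!
Let `Tₙ = E₁ + ⋯ + Eₙ`, `L = log (1/c)` and `h̃ = h 1_{(-∞, L]}`. Then `sε = ∑ₙ h̃(Tₙ)` for
`h(u) = s a c eᵘ`, and Campbell's formula `E e^{-∑ₙ h̃(Tₙ)} = exp (-θ ∫₀^L (1 - e^{-h}))` for the
Poisson process `(Tₙ)` computes the Laplace transform of `ε`. We prove the formula with a
martingale. Since `Φ(t) = exp (-θ ∫_{t ∧ L}^L (1 - e^{-h}))` solves `Φ' = θ (1 - e^{-h}) Φ` on
`(-∞, L]`, the function `-e^{-θx} Φ(t + x)` is an antiderivative of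
`θ e^{-θx} e^{-h̃(t + x)} Φ(t + x)` there, whence `E[e^{-h̃(t + E)} Φ(t + E)] = Φ(t)` for
`E ∼ Exp(θ)`. So `Mₙ = e^{-∑_{m ≤ n} h̃(Tₘ)} Φ(Tₙ)` has expectation `Φ(0)` for every `n`. Almost
surely some `Eₖ` exceeds `L`, after which `Mₙ = e^{-∑ₘ h̃(Tₘ)}`, and dominated convergence gives
the formula.
Finally the substitutions `v = c u` and `v = a c eᵘ` turn
`∫₀^a (1 - e^{-scu})/u du + ∫₀^L (1 - e^{-s a c eᵘ}) du` into `∫₀^a (1 - e^{-su})/u du`.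
-/

open MeasureTheory ProbabilityTheory Real Set Filter Topology

lemma intervalIntegrable_one_sub_exp_neg_mul_div (s a b : ℝ) :
    IntervalIntegrable (fun u => (1 - exp (-(s * u))) / u) volume a b := by
  set f : ℝ → ℝ := fun u => 1 - exp (-(s * u))
  have hf : Continuous (dslope f 0) := by
    refine continuous_iff_continuousAt.2 fun u => ?_
    rcases eq_or_ne u 0 with rfl | hu
    · exact continuousAt_dslope_same.2 (by fun_prop)
    · exact (continuousAt_dslope_of_ne hu).2 (by fun_prop)
  refine (hf.intervalIntegrable a b).congr_ae ?_
  filter_upwards [ae_restrict_of_ae (Measure.ae_ne volume (0 : ℝ))] with u hu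
  simp [dslope_of_ne f hu, slope_def_field, f]

lemma integral_one_sub_exp_neg_mul_div_comp_mul (s a : ℝ) {c : ℝ} (hc : c ≠ 0) :
    ∫ u in (0 : ℝ)..a, (1 - exp (-(s * c * u))) / u
      = ∫ v in (0 : ℝ)..c * a, (1 - exp (-(s * v))) / v := by
  have h : ∀ u, (1 - exp (-(s * c * u))) / u = c * ((1 - exp (-(s * (c * u)))) / (c * u)) := by
    intro u
    rw [← mul_div_assoc, mul_div_mul_left _ _ hc, mul_assoc]
  simp_rw [h]
  rw [intervalIntegral.integral_const_mul,
    intervalIntegral.integral_comp_mul_left (fun v => (1 - exp (-(s * v))) / v) hc, mul_zero,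
    smul_eq_mul, mul_inv_cancel_left₀ hc]

lemma integral_one_sub_exp_neg_mul_mul_exp (s L : ℝ) {A : ℝ} (hA : 0 < A) :
    ∫ u in (0 : ℝ)..L, (1 - exp (-(s * (A * exp u))))
      = ∫ v in A..A * exp L, (1 - exp (-(s * v))) / v := by
  have hderiv : ∀ x ∈ uIcc 0 L, HasDerivAt (fun u => A * exp u) (A * exp x) x :=
    fun x _ => (hasDerivAt_exp x).const_mul A
  have hcont : ContinuousOn (fun v => (1 - exp (-(s * v))) / v)
      ((fun u => A * exp u) '' uIcc 0 L) := by
    refine ContinuousOn.div (by fun_prop) continuousOn_id ?_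
    rintro _ ⟨u, _, rfl⟩
    positivity
  have := intervalIntegral.integral_comp_mul_deriv' hderiv (by fun_prop) hcont
  simp only [Function.comp_def, exp_zero, mul_one] at this
  rw [← this]
  refine intervalIntegral.integral_congr fun u _ => ?_
  have : A * exp u ≠ 0 := by positivity
  field_simp

lemma integral_one_sub_exp_neg_mul_div_add (s : ℝ) {a c : ℝ} (ha : 0 < a) (hc : 0 < c) :
    (∫ u in (0 : ℝ)..a, (1 - exp (-(s * c * u))) / u)
      + ∫ u in (0 : ℝ)..log (1 / c), (1 - exp (-(s * (a * c * exp u))))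
      = ∫ u in (0 : ℝ)..a, (1 - exp (-(s * u))) / u := by
  rw [integral_one_sub_exp_neg_mul_div_comp_mul s a hc.ne',
    integral_one_sub_exp_neg_mul_mul_exp s _ (by positivity),
    exp_log (by positivity), show a * c * (1 / c) = a by field_simp, mul_comm a c]
  exact intervalIntegral.integral_add_adjacent_intervals
    (intervalIntegrable_one_sub_exp_neg_mul_div s _ _)
    (intervalIntegrable_one_sub_exp_neg_mul_div s _ _)

lemma integral_mul_exp_neg_mul_Ioi {θ : ℝ} (hθ : 0 < θ) (b : ℝ) :
    ∫ x in Ioi b, θ * exp (-(θ * x)) = exp (-(θ * b)) := by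
  simp_rw [← neg_mul]
  rw [integral_const_mul, integral_exp_mul_Ioi (neg_lt_zero.2 hθ)]
  field_simp

namespace ProbabilityTheory

section Exponential

variable {θ : ℝ}

lemma integral_expMeasure_eq_integral_Ioi (hθ : 0 < θ) (f : ℝ → ℝ) :
    ∫ x, f x ∂expMeasure θ = ∫ x in Ioi 0, θ * exp (-(θ * x)) * f x := by
  rw [show expMeasure θ = volume.withDensity (exponentialPDF θ) from rfl,
    integral_withDensity_eq_integral_toReal_smul (f := exponentialPDF θ)
      (measurable_exponentialPDFReal θ).ennreal_ofReal
      (ae_of_all _ fun _ => ENNReal.ofReal_lt_top),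
    ← integral_Ici_eq_integral_Ioi, ← integral_indicator measurableSet_Ici]
  congr 1 with x
  by_cases hx : 0 ≤ x
  · simp [exponentialPDF_of_nonneg hx, hx, (mul_pos hθ (exp_pos _)).le]
  · simp [exponentialPDF_of_neg (not_le.1 hx), hx]

lemma ae_expMeasure_nonneg : ∀ᵐ x ∂expMeasure θ, 0 ≤ x := by
  simp only [ae_iff, not_le]
  exact (withDensity_apply _ measurableSet_Iio).trans (lintegral_exponentialPDF_of_nonpos le_rfl)

lemma expMeasure_Iic_lt_one (hθ : 0 < θ) (L : ℝ) : expMeasure θ (Iic L) < 1 := by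
  have := isProbabilityMeasure_expMeasure hθ
  rw [← ofReal_cdf, cdf_expMeasure_eq hθ, ENNReal.ofReal_lt_one]
  split_ifs
  · linarith [exp_pos (-(θ * L))]
  · exact zero_lt_one

end Exponential

variable {Ω β γ : Type*} [MeasurableSpace Ω] {μ : Measure Ω}

lemma IndepFun.integral_comp_eq_integral_integral [MeasurableSpace β] [MeasurableSpace γ]
    [IsFiniteMeasure μ] {X : Ω → β} {Y : Ω → γ} (hXY : IndepFun X Y μ) (hX : Measurable X)
    (hY : Measurable Y) {φ : β × γ → ℝ} (hφ : StronglyMeasurable φ)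
    (hint : Integrable (fun ω => φ (X ω, Y ω)) μ) :
    ∫ ω, φ (X ω, Y ω) ∂μ = ∫ ω, ∫ y, φ (X ω, y) ∂(μ.map Y) ∂μ := by
  have hmap : μ.map (fun ω => (X ω, Y ω)) = (μ.map X).prod (μ.map Y) :=
    (indepFun_iff_map_prod_eq_prod_map_map hX.aemeasurable hY.aemeasurable).1 hXY
  have hXY' : AEMeasurable (fun ω => (X ω, Y ω)) μ := (hX.prodMk hY).aemeasurable
  have hint' : Integrable φ ((μ.map X).prod (μ.map Y)) := by
    rw [← hmap]
    exact (integrable_map_measure hφ.aestronglyMeasurable hXY').2 hint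
  calc ∫ ω, φ (X ω, Y ω) ∂μ = ∫ p, φ p ∂(μ.map fun ω => (X ω, Y ω)) :=
        (integral_map hXY' hφ.aestronglyMeasurable).symm
    _ = ∫ x, ∫ y, φ (x, y) ∂(μ.map Y) ∂(μ.map X) := by rw [hmap, integral_prod _ hint']
    _ = ∫ ω, ∫ y, φ (X ω, y) ∂(μ.map Y) ∂μ :=
        integral_map hX.aemeasurable hφ.integral_prod_right'.aestronglyMeasurable

lemma iIndepFun.indepFun_of_measurable_iSup_lt [mβ : MeasurableSpace β] [MeasurableSpace γ]
    {E : ℕ → Ω → β} (hE : ∀ k, Measurable (E k)) (hind : iIndepFun E μ) (n : ℕ) {X : Ω → γ}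
    (hX : Measurable[⨆ k < n, mβ.comap (E k)] X) : IndepFun X (E n) μ := by
  have := indep_iSup_of_disjoint (fun k => (hE k).comap_le) hind.iIndep
    (S := Iio n) (T := {n}) (disjoint_singleton_right.2 (lt_irrefl n))
  rw [iSup_singleton] at this
  exact (IndepFun_iff_Indep X (E n) μ).2 (indep_of_indep_of_le_left this hX.comap_le)

lemma iIndepFun.ae_exists_lt [IsProbabilityMeasure μ] {E : ℕ → Ω → ℝ}
    (hind : iIndepFun E μ) {L : ℝ} {q : ENNReal} (hq : ∀ k, μ (E k ⁻¹' Iic L) ≤ q) (hq1 : q < 1) :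
    ∀ᵐ ω ∂μ, ∃ k, L < E k ω := by
  have hle (n : ℕ) : μ {ω | ¬ ∃ k, L < E k ω} ≤ q ^ n := calc
    μ {ω | ¬ ∃ k, L < E k ω} ≤ μ (⋂ k ∈ Finset.range n, E k ⁻¹' Iic L) :=
      measure_mono fun ω hω => by simp_all
    _ = ∏ k ∈ Finset.range n, μ (E k ⁻¹' Iic L) :=
      hind.measure_inter_preimage_eq_mul _ fun _ _ => measurableSet_Iic
    _ ≤ q ^ n := by simpa using Finset.prod_le_pow_card (Finset.range n) _ _ fun k _ => hq k
  exact ae_iff.2 (nonpos_iff_eq_zero.1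
    (ge_of_tendsto' (ENNReal.tendsto_pow_atTop_nhds_zero_of_lt_one hq1) hle))

end ProbabilityTheory

section PoissonLaplace

variable {θ L : ℝ} {h : ℝ → ℝ}

noncomputable def poissonLaplaceExponent (L : ℝ) (h : ℝ → ℝ) (t : ℝ) : ℝ :=
  ∫ u in t..L, (1 - exp (-h u))

/-- The Laplace transform of `∑ₙ h(Tₙ)` over the arrival times `Tₙ ∈ (t, L]` of a rate-`θ`
Poisson process. -/
noncomputable def poissonLaplaceFrom (θ L : ℝ) (h : ℝ → ℝ) (t : ℝ) : ℝ :=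
  exp (-(θ * poissonLaplaceExponent L h (min t L)))

lemma hasDerivAt_poissonLaplaceExponent (hh : Continuous h) (t : ℝ) :
    HasDerivAt (poissonLaplaceExponent L h) (-(1 - exp (-h t))) t := by
  have hq : Continuous fun u => 1 - exp (-h u) := by fun_prop
  exact intervalIntegral.integral_hasDerivAt_left (hq.intervalIntegrable t L)
    (hq.stronglyMeasurableAtFilter _ _) hq.continuousAt

lemma continuous_poissonLaplaceExponent (hh : Continuous h) :
    Continuous (poissonLaplaceExponent L h) :=
  continuous_iff_continuousAt.2 fun t => (hasDerivAt_poissonLaplaceExponent hh t).continuousAt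

lemma poissonLaplaceExponent_nonneg (hh : ∀ u, 0 ≤ h u) {t : ℝ} (htL : t ≤ L) :
    0 ≤ poissonLaplaceExponent L h t :=
  intervalIntegral.integral_nonneg htL
    fun u _ => sub_nonneg.2 (exp_le_one_iff.2 (neg_nonpos.2 (hh u)))

lemma poissonLaplaceFrom_of_le {t : ℝ} (hLt : L ≤ t) : poissonLaplaceFrom θ L h t = 1 := by
  simp [poissonLaplaceFrom, poissonLaplaceExponent, min_eq_right hLt]

lemma poissonLaplaceFrom_of_ge {t : ℝ} (htL : t ≤ L) :
    poissonLaplaceFrom θ L h t = exp (-(θ * poissonLaplaceExponent L h t)) := by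
  rw [poissonLaplaceFrom, min_eq_left htL]

lemma poissonLaplaceFrom_pos (t : ℝ) : 0 < poissonLaplaceFrom θ L h t := exp_pos _

lemma poissonLaplaceFrom_le_one (hθ : 0 ≤ θ) (hh : ∀ u, 0 ≤ h u) (t : ℝ) :
    poissonLaplaceFrom θ L h t ≤ 1 :=
  exp_le_one_iff.2 (neg_nonpos.2
    (mul_nonneg hθ (poissonLaplaceExponent_nonneg hh (min_le_right t L))))

lemma continuous_poissonLaplaceFrom (hh : Continuous h) :
    Continuous (poissonLaplaceFrom θ L h) := by
  have := continuous_poissonLaplaceExponent (L := L) hh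
  unfold poissonLaplaceFrom
  fun_prop

lemma integral_mul_exp_neg_mul_exp_neg_poissonLaplaceExponent (hh : Continuous h) (t m : ℝ) :
    ∫ x in (0 : ℝ)..m, θ * exp (-(θ * x)) *
        (exp (-h (t + x)) * exp (-(θ * poissonLaplaceExponent L h (t + x))))
      = exp (-(θ * poissonLaplaceExponent L h t))
        - exp (-(θ * m)) * exp (-(θ * poissonLaplaceExponent L h (t + m))) := by
  have hR := continuous_poissonLaplaceExponent (L := L) hh
  have hF (x : ℝ) : HasDerivAt
      (fun x => exp (-(θ * x)) * exp (-(θ * poissonLaplaceExponent L h (t + x))))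
      (-(θ * exp (-(θ * x)) *
        (exp (-h (t + x)) * exp (-(θ * poissonLaplaceExponent L h (t + x)))))) x := by
    have hexp : HasDerivAt (fun x => exp (-(θ * x))) (-θ * exp (-(θ * x))) x := by
      simpa [mul_comm] using ((hasDerivAt_id x).const_mul θ).neg.exp
    have hRt := (hasDerivAt_poissonLaplaceExponent (L := L) hh (t + x)).comp_const_add t x
    exact (hexp.mul (hRt.const_mul θ).fun_neg.exp).congr_deriv (by ring)
  have hFTC := intervalIntegral.integral_eq_sub_of_hasDerivAt (fun x _ => hF x)
    ((by fun_prop : Continuous _).intervalIntegrable 0 m)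
  simp only [intervalIntegral.integral_neg, add_zero, mul_zero, neg_zero, exp_zero,
    one_mul] at hFTC
  linarith

lemma integral_expMeasure_poissonLaplaceFrom (hθ : 0 < θ) (hh : Continuous h) (t : ℝ) :
    ∫ x, exp (-(Iic L).indicator h (t + x)) * poissonLaplaceFrom θ L h (t + x) ∂expMeasure θ
      = poissonLaplaceFrom θ L h t := by
  rw [integral_expMeasure_eq_integral_Ioi hθ]
  set f : ℝ → ℝ := fun x => θ * exp (-(θ * x)) *
    (exp (-(Iic L).indicator h (t + x)) * poissonLaplaceFrom θ L h (t + x))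
  have htail {m : ℝ} (hm : L ≤ t + m) : EqOn f (fun x => θ * exp (-(θ * x))) (Ioi m) :=
    fun x (hx : m < x) => by
      have hLx : L < t + x := by linarith
      simp [f, indicator_of_notMem (notMem_Iic.2 hLx), poissonLaplaceFrom_of_le hLx.le]
  rcases le_or_gt L t with hLt | htL
  · rw [setIntegral_congr_fun measurableSet_Ioi (htail (by simpa using hLt)),
      integral_mul_exp_neg_mul_Ioi hθ, poissonLaplaceFrom_of_le hLt]
    simp
  set m := L - t
  have hm : t + m = L := by ring
  have hhead : EqOn f (fun x => θ * exp (-(θ * x)) *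
      (exp (-h (t + x)) * exp (-(θ * poissonLaplaceExponent L h (t + x))))) (Ioc 0 m) :=
    fun x hx => by
      have hxL : t + x ≤ L := by linarith [hx.2]
      simp only [f, indicator_of_mem (mem_Iic.2 hxL), poissonLaplaceFrom_of_ge hxL]
  have hR := continuous_poissonLaplaceExponent (L := L) hh
  have hIoc : IntegrableOn f (Ioc 0 m) :=
    (by fun_prop : Continuous _).integrableOn_Ioc.congr_fun hhead.symm measurableSet_Ioc
  have hIoi : IntegrableOn f (Ioi m) := by
    have : IntegrableOn (fun x => θ * exp (-θ * x)) (Ioi m) :=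
      (exp_neg_integrableOn_Ioi m hθ).const_mul θ
    simp only [neg_mul] at this
    exact this.congr_fun (htail hm.ge).symm measurableSet_Ioi
  rw [← Ioc_union_Ioi_eq_Ioi (by linarith : (0 : ℝ) ≤ m),
    setIntegral_union Ioc_disjoint_Ioi_same measurableSet_Ioi hIoc hIoi,
    setIntegral_congr_fun measurableSet_Ioc hhead,
    setIntegral_congr_fun measurableSet_Ioi (htail hm.ge),
    ← intervalIntegral.integral_of_le (by linarith),
    integral_mul_exp_neg_mul_exp_neg_poissonLaplaceExponent hh, integral_mul_exp_neg_mul_Ioi hθ,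
    poissonLaplaceFrom_of_ge htL.le, hm]
  simp [poissonLaplaceExponent]

end PoissonLaplace

section LaplaceMartingale

variable {Ω : Type*} {θ L : ℝ} {h : ℝ → ℝ} {E : ℕ → Ω → ℝ}

/-- With `Tₘ = E₀ + ⋯ + E_{m-1}`, this is
`E[exp (-∑_{m ≥ 1} h(Tₘ) 1{Tₘ ≤ L}) | E₀, …, E_{n-1}]` when the `Eₖ` are i.i.d. `Exp(θ)`. -/
noncomputable def laplaceMartingale (θ L : ℝ) (h : ℝ → ℝ) (E : ℕ → Ω → ℝ) (n : ℕ) (ω : Ω) : ℝ :=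
  exp (-∑ m ∈ Finset.range n, (Iic L).indicator h (∑ k ∈ Finset.range (m + 1), E k ω)) *
    poissonLaplaceFrom θ L h (∑ k ∈ Finset.range n, E k ω)

lemma norm_laplaceMartingale_le_one (hθ : 0 ≤ θ) (hh : ∀ u, 0 ≤ h u) (n : ℕ) (ω : Ω) :
    ‖laplaceMartingale θ L h E n ω‖ ≤ 1 := by
  rw [laplaceMartingale, norm_of_nonneg (mul_nonneg (exp_pos _).le (poissonLaplaceFrom_pos _).le)]
  refine mul_le_one₀ (exp_le_one_iff.2 (neg_nonpos.2 ?_)) (poissonLaplaceFrom_pos _).le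
    (poissonLaplaceFrom_le_one hθ hh _)
  exact Finset.sum_nonneg fun m _ => indicator_nonneg (fun u _ => hh u) _

lemma measurable_exp_neg_sum_indicator_prodMk_sum {m : MeasurableSpace Ω} (hh : Continuous h)
    {n : ℕ} (hE : ∀ k < n, Measurable[m] (E k)) :
    Measurable[m] fun ω => (exp (-∑ i ∈ Finset.range n,
      (Iic L).indicator h (∑ k ∈ Finset.range (i + 1), E k ω)), ∑ k ∈ Finset.range n, E k ω) := by
  have hT (j : ℕ) (hj : j ≤ n) : Measurable[m] fun ω => ∑ k ∈ Finset.range j, E k ω :=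
    Finset.measurable_sum _ fun k hk => hE k (by simp at hk; omega)
  refine Measurable.prodMk ?_ (hT n le_rfl)
  exact (Finset.measurable_sum _ fun i hi => (hh.measurable.indicator measurableSet_Iic).comp
    (hT (i + 1) (by simp at hi; omega))).neg.exp

lemma measurable_laplaceMartingale [MeasurableSpace Ω] (hh : Continuous h)
    (hE : ∀ k, Measurable (E k)) (n : ℕ) : Measurable (laplaceMartingale θ L h E n) :=
  (measurable_fst.mul ((continuous_poissonLaplaceFrom hh).measurable.comp measurable_snd)).comp
    (measurable_exp_neg_sum_indicator_prodMk_sum hh fun k _ => hE k)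

lemma integral_laplaceMartingale [MeasurableSpace Ω] {μ : Measure Ω} [IsProbabilityMeasure μ]
    (hθ : 0 < θ) (hh : Continuous h) (hh0 : ∀ u, 0 ≤ h u) (hE : ∀ k, Measurable (E k))
    (hind : iIndepFun E μ) (hlaw : ∀ k, μ.map (E k) = expMeasure θ) (n : ℕ) :
    ∫ ω, laplaceMartingale θ L h E n ω ∂μ = poissonLaplaceFrom θ L h 0 := by
  induction n with
  | zero => simp [laplaceMartingale]
  | succ n ih =>
    set X : Ω → ℝ × ℝ := fun ω => (exp (-∑ i ∈ Finset.range n,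
      (Iic L).indicator h (∑ k ∈ Finset.range (i + 1), E k ω)), ∑ k ∈ Finset.range n, E k ω)
    set φ : (ℝ × ℝ) × ℝ → ℝ := fun p => p.1.1 *
      (exp (-(Iic L).indicator h (p.1.2 + p.2)) * poissonLaplaceFrom θ L h (p.1.2 + p.2))
    have hXpast : Measurable[⨆ k < n, MeasurableSpace.comap (E k) inferInstance] X :=
      measurable_exp_neg_sum_indicator_prodMk_sum hh fun k hk =>
        Measurable.of_comap_le (le_iSup₂ (f := fun k (_ : k < n) =>
          MeasurableSpace.comap (E k) inferInstance) k hk)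
    have hX : Measurable X := measurable_exp_neg_sum_indicator_prodMk_sum hh fun k _ => hE k
    have hφ : Measurable φ := by
      have := hh.measurable.indicator (measurableSet_Iic (a := L))
      have := (continuous_poissonLaplaceFrom (θ := θ) (L := L) hh).measurable
      fun_prop
    have hstep : laplaceMartingale θ L h E (n + 1) = fun ω => φ (X ω, E n ω) := by
      ext ω
      simp only [laplaceMartingale, φ, X, Finset.sum_range_succ, neg_add, exp_add]
      ring
    have hint : Integrable (laplaceMartingale θ L h E (n + 1)) μ :=
      .of_bound (measurable_laplaceMartingale hh hE _).aestronglyMeasurable 1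
        (ae_of_all _ (norm_laplaceMartingale_le_one hθ.le hh0 _))
    rw [hstep] at hint ⊢
    rw [(hind.indepFun_of_measurable_iSup_lt hE n hXpast).integral_comp_eq_integral_integral
      hX (hE n) hφ.stronglyMeasurable hint, ← ih]
    congr 1 with ω
    simp only [φ, hlaw n, integral_const_mul, integral_expMeasure_poissonLaplaceFrom hθ hh]
    rfl

lemma tendsto_laplaceMartingale {ω : Ω} (hnn : ∀ k, 0 ≤ E k ω) {k₀ : ℕ} (hk₀ : L < E k₀ ω) :
    Tendsto (fun n => laplaceMartingale θ L h E n ω) atTop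
      (𝓝 (exp (-∑' m, (Iic L).indicator h (∑ k ∈ Finset.range (m + 1), E k ω)))) := by
  have hbeyond (n : ℕ) (hn : k₀ < n) : L < ∑ k ∈ Finset.range n, E k ω :=
    hk₀.trans_le (Finset.single_le_sum (fun j _ => hnn j) (Finset.mem_range.2 hn))
  refine tendsto_atTop_of_eventually_const (i₀ := k₀ + 1) fun n hn => ?_
  rw [laplaceMartingale, poissonLaplaceFrom_of_le (hbeyond n (by omega)).le, mul_one,
    tsum_eq_sum (s := Finset.range n) fun m hm => indicator_of_notMem
      (notMem_Iic.2 (hbeyond (m + 1) (by simp at hm; omega))) h]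

theorem integral_exp_neg_tsum_indicator_arrivalTimes [MeasurableSpace Ω] {μ : Measure Ω}
    [IsProbabilityMeasure μ] (hθ : 0 < θ) (hL : 0 ≤ L) (hh : Continuous h) (hh0 : ∀ u, 0 ≤ h u)
    (hE : ∀ k, Measurable (E k)) (hind : iIndepFun E μ) (hlaw : ∀ k, μ.map (E k) = expMeasure θ) :
    ∫ ω, exp (-∑' m, (Iic L).indicator h (∑ k ∈ Finset.range (m + 1), E k ω)) ∂μ
      = exp (-(θ * ∫ u in (0 : ℝ)..L, (1 - exp (-h u)))) := by
  have hnn : ∀ᵐ ω ∂μ, ∀ k, 0 ≤ E k ω := ae_all_iff.2 fun k =>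
    ae_of_ae_map (hE k).aemeasurable (by rw [hlaw k]; exact ae_expMeasure_nonneg)
  have hexceeds : ∀ᵐ ω ∂μ, ∃ k, L < E k ω :=
    hind.ae_exists_lt (fun k => by rw [← Measure.map_apply (hE k) measurableSet_Iic, hlaw k])
      (expMeasure_Iic_lt_one hθ L)
  have hae : ∀ᵐ ω ∂μ, Tendsto (fun n => laplaceMartingale θ L h E n ω) atTop
      (𝓝 (exp (-∑' m, (Iic L).indicator h (∑ k ∈ Finset.range (m + 1), E k ω)))) := by
    filter_upwards [hnn, hexceeds] with ω hω ⟨k₀, hk₀⟩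
    exact tendsto_laplaceMartingale hω hk₀
  have hlim := tendsto_integral_of_dominated_convergence (fun _ => (1 : ℝ))
    (fun n => (measurable_laplaceMartingale hh hE n).aestronglyMeasurable) (integrable_const 1)
    (fun n => ae_of_all _ (norm_laplaceMartingale_le_one hθ.le hh0 n)) hae
  simp only [integral_laplaceMartingale hθ hh hh0 hE hind hlaw] at hlim
  rw [tendsto_nhds_unique hlim tendsto_const_nhds, poissonLaplaceFrom_of_ge hL]
  rfl

end LaplaceMartingale

theorem statement14_general {Ω₁ Ω₂ : Type*} [MeasurableSpace Ω₁] [MeasurableSpace Ω₂]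
    (P₁ : Measure Ω₁) (P₂ : Measure Ω₂)
    [IsProbabilityMeasure P₁] [IsProbabilityMeasure P₂]
    (θ a c : ℝ) (hθ : 0 < θ) (ha : 0 < a) (hc0 : 0 < c) (hc1 : c < 1)
    (D : Ω₁ → ℝ)
    (hGD : ∀ s : ℝ, 0 ≤ s →
      ∫ ω, Real.exp (-(s * D ω)) ∂P₁ =
        Real.exp (-(θ * ∫ u in (0:ℝ)..a, (1 - Real.exp (-(s * u))) / u)))
    (E : ℕ → Ω₂ → ℝ) (hE : ∀ k, Measurable (E k))
    (hEindep : iIndepFun E P₂)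
    (hElaw : ∀ k, P₂.map (E k) = ProbabilityTheory.expMeasure θ)
    (ε : Ω₂ → ℝ)
    (hε : ∀ ω, ε ω =
      ∑' n : ℕ,
        if (∑ k ∈ Finset.range (n + 1), E k ω) ≤ Real.log (1 / c) then
          a * c * Real.exp (∑ k ∈ Finset.range (n + 1), E k ω)
        else 0) :
    ∀ s : ℝ, 0 ≤ s →
      ∫ ω : Ω₁ × Ω₂, Real.exp (-(s * (c * D ω.1 + ε ω.2))) ∂(P₁.prod P₂) =
        Real.exp (-(θ * ∫ u in (0:ℝ)..a, (1 - Real.exp (-(s * u))) / u)) := by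
  intro s hs
  have hL : 0 ≤ log (1 / c) := log_nonneg (one_le_one_div hc0 hc1.le)
  have hsε (ω : Ω₂) : s * ε ω = ∑' n, (Iic (log (1 / c))).indicator
      (fun u => s * (a * c * exp u)) (∑ k ∈ Finset.range (n + 1), E k ω) := by
    rw [hε ω, ← tsum_mul_left]
    simp only [indicator_apply, mem_Iic, mul_ite, mul_zero]
  calc ∫ ω : Ω₁ × Ω₂, exp (-(s * (c * D ω.1 + ε ω.2))) ∂(P₁.prod P₂)
      = (∫ ω, exp (-(s * c * D ω)) ∂P₁) * ∫ ω, exp (-(s * ε ω)) ∂P₂ := by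
        rw [← integral_prod_mul]
        congr 1 with ω
        rw [← exp_add]
        ring_nf
    _ = exp (-(θ * ∫ u in (0 : ℝ)..a, (1 - exp (-(s * c * u))) / u))
          * exp (-(θ * ∫ u in (0 : ℝ)..log (1 / c), (1 - exp (-(s * (a * c * exp u)))))) := by
        simp only [hsε]
        rw [hGD (s * c) (by positivity), integral_exp_neg_tsum_indicator_arrivalTimes hθ hL
          (by fun_prop) (fun u => by positivity) hE hEindep hElaw]
    _ = exp (-(θ * ∫ u in (0 : ℝ)..a, (1 - exp (-(s * u))) / u)) := by
        rw [← exp_add, ← integral_one_sub_exp_neg_mul_div_add s ha hc0]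
        ring_nf

/-- Let `0 < c < 1`, let `D ∼ GD(θ,a)`, and let `(E_k)` be i.i.d. exponential with rate `θ`,
independent of `D` (modelled on a product space), with arrival times `T_n = E_1 + ⋯ + E_n`.
With the innovation `ε = Σ_{n=1}^∞ a c e^{T_n} 1{T_n ≤ log(1/c)}`, the random variable
`cD + ε` again has the generalized Dickman distribution `GD(θ,a)`; hence the AR(1) process
`X_n = cX_{n−1} + ε_n` with such i.i.d. innovations is strictly stationary with `GD(θ,a)`
marginals. -/
theorem statement14 {Ω₁ Ω₂ : Type*} [MeasurableSpace Ω₁] [MeasurableSpace Ω₂]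
    (P₁ : Measure Ω₁) (P₂ : Measure Ω₂)
    [IsProbabilityMeasure P₁] [IsProbabilityMeasure P₂]
    (θ a c : ℝ) (hθ : 0 < θ) (ha : 0 < a) (hc0 : 0 < c) (hc1 : c < 1)
    (D : Ω₁ → ℝ) (hD : Measurable D) (hDnn : ∀ ω, 0 ≤ D ω)
    (hGD : ∀ s : ℝ, 0 ≤ s →
      ∫ ω, Real.exp (-(s * D ω)) ∂P₁ =
        Real.exp (-(θ * ∫ u in (0:ℝ)..a, (1 - Real.exp (-(s * u))) / u)))
    (E : ℕ → Ω₂ → ℝ) (hE : ∀ k, Measurable (E k))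
    (hEindep : iIndepFun E P₂)
    (hElaw : ∀ k, P₂.map (E k) = ProbabilityTheory.expMeasure θ)
    (ε : Ω₂ → ℝ)
    (hε : ∀ ω, ε ω =
      ∑' n : ℕ,
        if (∑ k ∈ Finset.range (n + 1), E k ω) ≤ Real.log (1 / c) then
          a * c * Real.exp (∑ k ∈ Finset.range (n + 1), E k ω)
        else 0) :
    ∀ s : ℝ, 0 ≤ s →
      ∫ ω : Ω₁ × Ω₂, Real.exp (-(s * (c * D ω.1 + ε ω.2))) ∂(P₁.prod P₂) =
        Real.exp (-(θ * ∫ u in (0:ℝ)..a, (1 - Real.exp (-(s * u))) / u)) :=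
  statement14_general P₁ P₂ θ a c hθ ha hc0 hc1 D hGD E hE hEindep hElaw ε hε
end
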